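/- In the 3-strand configuration graph of Θ_m: (1) every vertex of the form {i,j,k} with i,j,k three distinct numbered vertices has degree exactly 6; (2) every vertex of the form {a,b,i} has degree exactly 2(m−1); (3) every vertex of the form {a,i,j} (i ≠ j numbered) has degree exactly m. -/

import Mathlib

/-!
A neighbour of a 3-set `S` in the configuration graph is obtained by moving one element
`u ∈ S` along an edge `u — v` of the underlying graph to a vertex `v ∉ S`, and the pair
`(u, v)` is recovered from the neighbour, so the degree of `S` is `∑ u ∈ S, #(N(u) \ S)`.
Since `Θ_m` is the complete bipartite graph `K_{m,2}`, a set `S` with `l` numbered vertices and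
`r` vertices among `a, b` has degree `l (2 - r) + r (m - l)`, which gives `6`, `2(m - 1)` and
`2 + (m - 2) = m` for `(l, r) = (3, 0), (1, 2), (2, 1)`.
-/

/-- The subdivided generalized theta graph `Θ_m`: vertices `inl i` (the numbered
vertices `1,…,m`) and `inr 0 = a`, `inr 1 = b`; edges exactly `inl i — inr t`. -/
def theta (m : ℕ) : SimpleGraph (Fin m ⊕ Fin 2) where
  Adj x y := x.isLeft ≠ y.isLeft
  symm := ⟨fun _ _ h => h.symm⟩
  loopless := ⟨fun _ h => h rfl⟩

instance (m : ℕ) : DecidableRel (theta m).Adj :=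
  fun x y => inferInstanceAs (Decidable (x.isLeft ≠ y.isLeft))

/-- The 3-strand configuration graph of a graph `G`: vertices are 3-element
subsets of the vertex set; `S` is adjacent to `T` iff `|S ∩ T| = 2` and the
unique vertex of `S \ T` is adjacent in `G` to the unique vertex of `T \ S`. -/
def conf3 {V : Type*} [DecidableEq V] (G : SimpleGraph V) :
    SimpleGraph {S : Finset V // S.card = 3} where
  Adj S T := (S.1 ∩ T.1).card = 2 ∧
    ∃ u v, u ∈ S.1 \ T.1 ∧ v ∈ T.1 \ S.1 ∧ G.Adj u v
  symm := by
    constructor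
    rintro S T ⟨hc, u, v, hu, hv, ha⟩
    exact ⟨by rwa [Finset.inter_comm], v, u, hv, hu, ha.symm⟩
  loopless := by
    constructor
    rintro S ⟨hc, u, v, hu, _⟩
    simp at hu

instance {V : Type*} [DecidableEq V] [Fintype V] (G : SimpleGraph V)
    [DecidableRel G.Adj] : DecidableRel (conf3 G).Adj :=
  fun _ _ => inferInstanceAs (Decidable (_ ∧ _))

open Finset

namespace Finset

section Exchange

variable {α : Type*} [DecidableEq α] {s t : Finset α} {u v : α}

lemma inter_insert_erase_of_notMem (hv : v ∉ s) : s ∩ insert v (s.erase u) = s.erase u := by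
  grind

lemma sdiff_insert_erase_of_mem_of_notMem (hu : u ∈ s) (hv : v ∉ s) :
    s \ insert v (s.erase u) = {u} := by
  grind

lemma insert_erase_sdiff_of_notMem (hv : v ∉ s) : insert v (s.erase u) \ s = {v} := by
  grind

lemma card_insert_erase_of_mem_of_notMem (hu : u ∈ s) (hv : v ∉ s) :
    #(insert v (s.erase u)) = #s := by
  rw [card_insert_of_notMem (fun h => hv (mem_of_mem_erase h)), card_erase_add_one hu]

lemma eq_insert_erase_of_card_inter (hst : #s = #t) (hinter : #(s ∩ t) + 1 = #s)
    (hu : u ∈ s \ t) (hv : v ∈ t \ s) : t = insert v (s.erase u) := by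
  rw [mem_sdiff] at hu hv
  have hsub : s ∩ t ⊆ s.erase u := fun x hx =>
    mem_erase.2 ⟨fun h => hu.2 (h ▸ (mem_inter.1 hx).2), (mem_inter.1 hx).1⟩
  have herase : s.erase u ⊆ t := by
    rw [← eq_of_subset_of_card_le hsub (by rw [card_erase_of_mem hu.1]; omega)]
    exact inter_subset_right
  symm
  exact eq_of_subset_of_card_le (insert_subset hv.1 herase)
    (by rw [card_insert_erase_of_mem_of_notMem hu.1 hv.2, hst])

end Exchange

section Sum

variable {α β : Type*}

@[simp] lemma toLeft_singleton_inl (a : α) : ({.inl a} : Finset (α ⊕ β)).toLeft = {a} := by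
  ext; simp

@[simp] lemma toLeft_singleton_inr (b : β) : ({.inr b} : Finset (α ⊕ β)).toLeft = ∅ := by
  ext; simp

@[simp] lemma toRight_singleton_inl (a : α) : ({.inl a} : Finset (α ⊕ β)).toRight = ∅ := by
  ext; simp

@[simp] lemma toRight_singleton_inr (b : β) : ({.inr b} : Finset (α ⊕ β)).toRight = {b} := by
  ext; simp

variable [DecidableEq α] [DecidableEq β]

lemma map_inl_univ_sdiff [Fintype α] (S : Finset (α ⊕ β)) : univ.map .inl \ S = S.toLeftᶜ.map .inl := by
  ext (x | y) <;> simp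

lemma map_inr_univ_sdiff [Fintype β] (S : Finset (α ⊕ β)) : univ.map .inr \ S = S.toRightᶜ.map .inr := by
  ext (x | y) <;> simp

end Sum

end Finset

section Conf3

variable {V : Type*} [DecidableEq V] {G : SimpleGraph V}

lemma conf3_adj_iff {S T : {S : Finset V // S.card = 3}} :
    (conf3 G).Adj S T ↔ ∃ u ∈ S.1, ∃ v ∉ S.1, G.Adj u v ∧ T.1 = insert v (S.1.erase u) := by
  constructor
  · rintro ⟨hinter, u, v, hu, hv, huv⟩
    exact ⟨u, (mem_sdiff.1 hu).1, v, (mem_sdiff.1 hv).2, huv,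
      eq_insert_erase_of_card_inter (S.2.trans T.2.symm) (by rw [hinter, S.2]) hu hv⟩
  · rintro ⟨u, hu, v, hv, huv, hT⟩
    refine ⟨?_, u, v, ?_, ?_, huv⟩ <;> rw [hT]
    · rw [inter_insert_erase_of_notMem hv, card_erase_of_mem hu, S.2]
    · simp [sdiff_insert_erase_of_mem_of_notMem hu hv]
    · simp [insert_erase_sdiff_of_notMem hv]

lemma conf3_degree_eq_sum [Fintype V] [DecidableRel G.Adj] (S : Finset V) (hS : #S = 3) :
    (conf3 G).degree ⟨S, hS⟩ = ∑ u ∈ S, #(G.neighborFinset u \ S) := by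
  rw [← card_sigma, ← SimpleGraph.card_neighborFinset_eq_degree]
  symm
  have mem_iff {p : Σ _ : V, V} : p ∈ S.sigma (fun u => G.neighborFinset u \ S) ↔
      p.1 ∈ S ∧ p.2 ∉ S ∧ G.Adj p.1 p.2 := by
    simp [and_comm]
  refine card_bij (fun p hp => ⟨insert p.2 (S.erase p.1), ?_⟩) ?_ ?_ ?_
  · obtain ⟨hu, hv, -⟩ := mem_iff.1 hp
    rw [card_insert_erase_of_mem_of_notMem hu hv, hS]
  · intro p hp
    obtain ⟨hu, hv, huv⟩ := mem_iff.1 hp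
    exact (SimpleGraph.mem_neighborFinset _ _ _).2 (conf3_adj_iff.2 ⟨_, hu, _, hv, huv, rfl⟩)
  · rintro ⟨u, v⟩ hp ⟨u', v'⟩ hp' h
    obtain ⟨hu, hv, -⟩ := mem_iff.1 hp
    obtain ⟨hu', hv', -⟩ := mem_iff.1 hp'
    have h := congrArg Subtype.val h
    have hu_eq := congrArg (S \ ·) h
    have hv_eq := congrArg (· \ S) h
    simp only [sdiff_insert_erase_of_mem_of_notMem hu hv,
      sdiff_insert_erase_of_mem_of_notMem hu' hv', insert_erase_sdiff_of_notMem hv,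
      insert_erase_sdiff_of_notMem hv', singleton_inj] at hu_eq hv_eq
    subst hu_eq hv_eq
    rfl
  · intro T hT
    obtain ⟨u, hu, v, hv, huv, hT⟩ :=
      conf3_adj_iff.1 ((SimpleGraph.mem_neighborFinset _ _ _).1 hT)
    exact ⟨⟨u, v⟩, mem_iff.2 ⟨hu, hv, huv⟩, Subtype.ext hT.symm⟩

end Conf3

section CompleteBipartite

variable {V W : Type*} [Fintype V] [Fintype W]

lemma completeBipartiteGraph_neighborFinset_inl
    [DecidableRel (completeBipartiteGraph V W).Adj] (v : V) :
    (completeBipartiteGraph V W).neighborFinset (.inl v) = univ.map .inr := by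
  ext (x | y) <;> simp

lemma completeBipartiteGraph_neighborFinset_inr
    [DecidableRel (completeBipartiteGraph V W).Adj] (w : W) :
    (completeBipartiteGraph V W).neighborFinset (.inr w) = univ.map .inl := by
  ext (x | y) <;> simp

lemma conf3_completeBipartiteGraph_degree [DecidableEq V] [DecidableEq W]
    [DecidableRel (completeBipartiteGraph V W).Adj] (S : Finset (V ⊕ W)) (hS : #S = 3) :
    (conf3 (completeBipartiteGraph V W)).degree ⟨S, hS⟩ =
      #S.toLeft * (Fintype.card W - #S.toRight) + #S.toRight * (Fintype.card V - #S.toLeft) := by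
  simp [conf3_degree_eq_sum, sum_sum_eq_sum_toLeft_add_sum_toRight,
    completeBipartiteGraph_neighborFinset_inl, completeBipartiteGraph_neighborFinset_inr,
    map_inl_univ_sdiff, map_inr_univ_sdiff, card_compl]

end CompleteBipartite

lemma theta_eq_completeBipartiteGraph (m : ℕ) :
    theta m = completeBipartiteGraph (Fin m) (Fin 2) := by
  ext (x | x) (y | y) <;> simp [theta]

lemma conf3_theta_degree (m : ℕ) (S : Finset (Fin m ⊕ Fin 2)) (hS : #S = 3) :
    (conf3 (theta m)).degree ⟨S, hS⟩ =
      #S.toLeft * (2 - #S.toRight) + #S.toRight * (m - #S.toLeft) := by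
  classical
  convert conf3_completeBipartiteGraph_degree (V := Fin m) (W := Fin 2) S hS using 3 <;>
    simp [theta_eq_completeBipartiteGraph]

/-- Degrees in the 3-strand configuration graph of `Θ_m` (`a = inr 0`,
`b = inr 1`): a vertex `{i,j,k}` has degree 6, a vertex `{a,b,i}` has degree
`2(m-1)`, and a vertex `{a,i,j}` has degree `m`. -/
theorem conf3_theta_degrees (m : ℕ) :
    (∀ i j k : Fin m, ∀ hij : i ≠ j, ∀ hik : i ≠ k, ∀ hjk : j ≠ k,
      (conf3 (theta m)).degree
        ⟨{Sum.inl i, Sum.inl j, Sum.inl k},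
          Finset.card_eq_three.mpr ⟨_, _, _, by simp [hij], by simp [hik], by simp [hjk], rfl⟩⟩
        = 6) ∧
    (∀ i : Fin m,
      (conf3 (theta m)).degree
        ⟨{Sum.inr 0, Sum.inr 1, Sum.inl i},
          Finset.card_eq_three.mpr ⟨_, _, _, by simp, by simp, by simp, rfl⟩⟩
        = 2 * (m - 1)) ∧
    (∀ i j : Fin m, ∀ hij : i ≠ j,
      (conf3 (theta m)).degree
        ⟨{Sum.inr 0, Sum.inl i, Sum.inl j},
          Finset.card_eq_three.mpr ⟨_, _, _, by simp, by simp, by simp [hij], rfl⟩⟩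
        = m) := by
  refine ⟨fun i j k hij hik hjk => ?_, fun i => ?_, fun i j hij => ?_⟩ <;>
    rw [conf3_theta_degree]
  · simp [hij, hik, hjk]
  · simp [two_mul]
  · simp [hij]
    omega
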